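/- arXiv:1510.03366 — 6 statements merged into one kernel-verified Lean document; each statement's English description precedes it below -/
import Mathlib

section
/- Let Q(x) = (5/2)^{1/3} cosh(3x/2)^{-2/3} be the quartic gKdV soliton, and let A(x) = (1/3) Q'(x) ∫₀ˣ Q²(s) ds - (2/3) Q³(x). Then A solves the ODE A'' - A + 4Q³A + 4Q³ = 0 on ℝ, A is even, and A decays exponentially at ±∞. -/
/-
The soliton satisfies `Q^3 = (5/2) sech²(3x/2)`, so with `Q' = -tanh(3x/2) Q` and
`tanh² = 1 - sech²` one gets the profile equation `Q'' = Q - Q^4` and the first integral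
`Q'^2 = Q^2 - (2/5) Q^5` by pure algebra. Differentiating `A` twice, the terms containing
`∫₀ˣ Q²` cancel against `-A + 4Q³A` because `Q'` lies in the kernel of the linearized operator
(`Q''' = Q' - 4Q³Q'`), and what remains vanishes by the first integral. Evenness follows from
`Q` even, `Q'` and `∫₀ˣ Q²` odd; decay from `Q ≤ 3e^{-|x|}`, `|Q'| ≤ Q` and the boundedness of
`∫₀ˣ Q²`.
-/

open Real

theorem Real.hasDerivAt_tanh (x : ℝ) : HasDerivAt tanh (1 / cosh x ^ 2) x := by
  rw [show tanh = sinh / cosh from funext tanh_eq_sinh_div_cosh]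
  refine ((hasDerivAt_sinh x).div (hasDerivAt_cosh x) (cosh_pos x).ne').congr_deriv ?_
  rw [← sq, ← sq, cosh_sq_sub_sinh_sq]

theorem Real.tanh_sq (x : ℝ) : tanh x ^ 2 = 1 - 1 / cosh x ^ 2 := by
  have := (cosh_pos x).ne'
  rw [tanh_eq_sinh_div_cosh]
  field_simp
  linear_combination -cosh_sq_sub_sinh_sq x

theorem Real.exp_abs_le_two_mul_cosh (x : ℝ) : exp |x| ≤ 2 * cosh x := by
  rw [← cosh_abs, cosh_eq]
  linarith [exp_pos (-|x|)]

section
variable {E : Type*} [NormedAddCommGroup E] [NormedSpace ℝ E]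

theorem intervalIntegral.integral_zero_neg_of_even {f : ℝ → E} (hf : ∀ s, f (-s) = f s)
    (x : ℝ) : ∫ s in (0 : ℝ)..-x, f s = -∫ s in (0 : ℝ)..x, f s := by
  rw [intervalIntegral.integral_symm, ← neg_zero, ← intervalIntegral.integral_comp_neg]
  simp only [hf, neg_zero]

theorem norm_integral_le_of_norm_le_exp_of_nonneg {f : ℝ → E} {M γ x : ℝ} (hγ : 0 < γ)
    (hf : Continuous f) (hbound : ∀ s, ‖f s‖ ≤ M * exp (-γ * |s|)) (hx : 0 ≤ x) :
    ‖∫ s in (0 : ℝ)..x, f s‖ ≤ M / γ := by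
  have hM : 0 ≤ M := by simpa using (norm_nonneg (f 0)).trans (hbound 0)
  have hprim : ∀ s, HasDerivAt (fun s => -(M / γ) * exp (-γ * s)) (M * exp (-γ * s)) s := by
    intro s
    refine ((((hasDerivAt_id' s).const_mul (-γ)).exp).const_mul (-(M / γ))).congr_deriv ?_
    field_simp
  calc ‖∫ s in (0 : ℝ)..x, f s‖ ≤ ∫ s in (0 : ℝ)..x, ‖f s‖ :=
        intervalIntegral.norm_integral_le_integral_norm hx
    _ ≤ -(M / γ) * exp (-γ * x) - -(M / γ) * exp (-γ * 0) :=
        intervalIntegral.integral_le_sub_of_hasDeriv_right_of_le hx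
          (by fun_prop) (fun s _ => (hprim s).hasDerivWithinAt)
          hf.norm.integrableOn_Icc fun s hs => by
            simpa [abs_of_pos hs.1] using hbound s
    _ ≤ M / γ := by
        have : 0 ≤ M / γ * exp (-γ * x) := by positivity
        simp only [mul_zero, exp_zero]; linarith

theorem norm_integral_le_of_norm_le_exp {f : ℝ → E} {M γ : ℝ} (hγ : 0 < γ)
    (hf : Continuous f) (hbound : ∀ s, ‖f s‖ ≤ M * exp (-γ * |s|)) (x : ℝ) :
    ‖∫ s in (0 : ℝ)..x, f s‖ ≤ M / γ := by
  rcases le_total 0 x with hx | hx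
  · exact norm_integral_le_of_norm_le_exp_of_nonneg hγ hf hbound hx
  · have := norm_integral_le_of_norm_le_exp_of_nonneg (f := fun s => f (-s)) hγ (by fun_prop)
      (fun s => by simpa using hbound (-s)) (neg_nonneg.2 hx)
    rwa [intervalIntegral.integral_comp_neg, neg_neg, neg_zero, intervalIntegral.integral_symm,
      norm_neg] at this

end

namespace QuarticGKdV

noncomputable def profileA (Q Q' I : ℝ → ℝ) (x : ℝ) : ℝ := 1 / 3 * Q' x * I x - 2 / 3 * Q x ^ 3

section
variable {Q Q' I : ℝ → ℝ}

theorem hasDerivAt_profileA (hQ : ∀ x, HasDerivAt Q (Q' x) x)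
    (hQ' : ∀ x, HasDerivAt Q' (Q x - Q x ^ 4) x) (hI : ∀ x, HasDerivAt I (Q x ^ 2) x) (x : ℝ) :
    HasDerivAt (profileA Q Q' I)
      (1 / 3 * (Q x - Q x ^ 4) * I x - 5 / 3 * Q x ^ 2 * Q' x) x := by
  refine ((((hQ' x).const_mul (1 / 3)).mul (hI x)).sub
    (((hQ x).pow 3).const_mul (2 / 3))).congr_deriv ?_
  ring

theorem profileA_linearized_eq (hQ : ∀ x, HasDerivAt Q (Q' x) x)
    (hQ' : ∀ x, HasDerivAt Q' (Q x - Q x ^ 4) x) (hI : ∀ x, HasDerivAt I (Q x ^ 2) x)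
    (henergy : ∀ x, Q' x ^ 2 = Q x ^ 2 - 2 / 5 * Q x ^ 5) (x : ℝ) :
    deriv (deriv (profileA Q Q' I)) x - profileA Q Q' I x + 4 * Q x ^ 3 * profileA Q Q' I x
      + 4 * Q x ^ 3 = 0 := by
  have hA' := hasDerivAt_profileA hQ hQ' hI
  have hA'' : HasDerivAt (fun y => 1 / 3 * (Q y - Q y ^ 4) * I y - 5 / 3 * Q y ^ 2 * Q' y)
      (1 / 3 * ((Q' x - 4 * Q x ^ 3 * Q' x) * I x + (Q x - Q x ^ 4) * Q x ^ 2)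
        - 5 / 3 * (2 * Q x * Q' x * Q' x + Q x ^ 2 * (Q x - Q x ^ 4))) x := by
    refine (((((hQ x).sub ((hQ x).pow 4)).const_mul (1 / 3)).mul (hI x)).sub
      ((((hQ x).pow 2).const_mul (5 / 3)).mul (hQ' x))).congr_deriv ?_
    simp only [Pi.pow_apply, Pi.sub_apply]
    ring
  rw [funext fun y => (hA' y).deriv, hA''.deriv, profileA]
  linear_combination (-10 / 3 * Q x) * henergy x

theorem profileA_neg (hQ : ∀ x, Q (-x) = Q x) (hQ' : ∀ x, Q' (-x) = -Q' x)
    (hI : ∀ x, I (-x) = -I x) (x : ℝ) : profileA Q Q' I (-x) = profileA Q Q' I x := by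
  simp only [profileA, hQ, hQ', hI]
  ring

theorem abs_profileA_le {K M x : ℝ} (hQ0 : 0 ≤ Q x) (hQ : Q x ≤ K * exp (-|x|))
    (hQ' : |Q' x| ≤ Q x) (hI : |I x| ≤ M) :
    |profileA Q Q' I x| ≤ (K * M / 3 + 2 * K ^ 3 / 3) * exp (-|x|) := by
  have he : exp (-|x|) ≤ 1 := exp_le_one_iff.2 (neg_nonpos.2 (abs_nonneg x))
  have hK : 0 ≤ K * exp (-|x|) := hQ0.trans hQ
  have hK0 : 0 ≤ K := (mul_nonneg_iff_of_pos_right (exp_pos _)).1 hK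
  have hcube : Q x ^ 3 ≤ K ^ 3 * exp (-|x|) := calc
    Q x ^ 3 ≤ (K * exp (-|x|)) ^ 3 := pow_le_pow_left₀ hQ0 hQ 3
    _ = K ^ 3 * exp (-|x|) * exp (-|x|) ^ 2 := by ring
    _ ≤ K ^ 3 * exp (-|x|) :=
      mul_le_of_le_one_right (by positivity) (pow_le_one₀ (exp_pos _).le he)
  have hprod : |Q' x| * |I x| ≤ K * exp (-|x|) * M :=
    mul_le_mul (hQ'.trans hQ) hI (abs_nonneg _) hK
  calc |profileA Q Q' I x| ≤ 1 / 3 * |Q' x * I x| + 2 / 3 * Q x ^ 3 := by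
        rw [profileA, abs_le]
        constructor <;>
          linarith [le_abs_self (Q' x * I x), neg_abs_le (Q' x * I x), pow_nonneg hQ0 3]
    _ = 1 / 3 * (|Q' x| * |I x|) + 2 / 3 * Q x ^ 3 := by rw [abs_mul]
    _ ≤ (K * M / 3 + 2 * K ^ 3 / 3) * exp (-|x|) := by nlinarith
end

noncomputable def soliton (x : ℝ) : ℝ :=
  ((5 : ℝ) / 2) ^ ((1 : ℝ) / 3) * cosh (3 * x / 2) ^ (-(2 : ℝ) / 3)

theorem soliton_pos (x : ℝ) : 0 < soliton x := by
  unfold soliton; have := cosh_pos (3 * x / 2); positivity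

theorem soliton_neg (x : ℝ) : soliton (-x) = soliton x := by
  simp only [soliton, mul_neg, neg_div, cosh_neg]

theorem soliton_cube (x : ℝ) : soliton x ^ 3 = 5 / 2 / cosh (3 * x / 2) ^ 2 := by
  have hc := cosh_pos (3 * x / 2)
  rw [soliton, mul_pow, ← rpow_natCast, ← rpow_natCast, ← rpow_mul (by norm_num),
    ← rpow_mul hc.le]
  norm_num [div_eq_mul_inv]

theorem hasDerivAt_soliton (x : ℝ) :
    HasDerivAt soliton (-tanh (3 * x / 2) * soliton x) x := by
  have hc := cosh_pos (3 * x / 2)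
  have hlin := ((hasDerivAt_id' x).const_mul (3 : ℝ)).div_const 2
  have h := ((hasDerivAt_rpow_const (p := -(2 : ℝ) / 3) (Or.inl hc.ne')).comp x
    (hlin.cosh)).const_mul (((5 : ℝ) / 2) ^ ((1 : ℝ) / 3))
  refine h.congr_deriv ?_
  rw [soliton, tanh_eq_sinh_div_cosh, show -(2 : ℝ) / 3 - 1 = -(2 : ℝ) / 3 + -1 by norm_num,
    rpow_add hc, rpow_neg_one]
  field_simp

noncomputable def solitonDeriv (x : ℝ) : ℝ := -tanh (3 * x / 2) * soliton x

theorem deriv_soliton : deriv soliton = solitonDeriv :=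
  funext fun x => (hasDerivAt_soliton x).deriv

theorem one_div_cosh_sq_eq_soliton_cube (x : ℝ) :
    1 / cosh (3 * x / 2) ^ 2 = 2 / 5 * soliton x ^ 3 := by
  rw [soliton_cube]; ring

theorem hasDerivAt_solitonDeriv (x : ℝ) :
    HasDerivAt solitonDeriv (soliton x - soliton x ^ 4) x := by
  have hlin := ((hasDerivAt_id' x).const_mul (3 : ℝ)).div_const 2
  refine (((hasDerivAt_tanh _).comp x hlin).neg.mul (hasDerivAt_soliton x)).congr_deriv ?_
  simp only [Function.comp_apply, Pi.neg_apply]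
  linear_combination (-5 / 2 * soliton x) * one_div_cosh_sq_eq_soliton_cube x
    + soliton x * tanh_sq (3 * x / 2)

theorem solitonDeriv_sq (x : ℝ) :
    solitonDeriv x ^ 2 = soliton x ^ 2 - 2 / 5 * soliton x ^ 5 := by
  rw [solitonDeriv]
  linear_combination soliton x ^ 2 * tanh_sq (3 * x / 2)
    - soliton x ^ 2 * one_div_cosh_sq_eq_soliton_cube x

theorem solitonDeriv_neg (x : ℝ) : solitonDeriv (-x) = -solitonDeriv x := by
  simp only [solitonDeriv, soliton_neg, mul_neg, neg_div, tanh_neg, neg_neg, neg_mul]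

theorem abs_solitonDeriv_le (x : ℝ) : |solitonDeriv x| ≤ soliton x := by
  rw [solitonDeriv, abs_mul, abs_neg, abs_of_pos (soliton_pos x)]
  exact mul_le_of_le_one_left (soliton_pos x).le (abs_tanh_lt_one _).le

theorem soliton_le (x : ℝ) : soliton x ≤ 3 * exp (-|x|) := by
  have hcosh : exp (3 * |x| / 2) ≤ 2 * cosh (3 * x / 2) := by
    simpa [abs_div, abs_mul] using exp_abs_le_two_mul_cosh (3 * x / 2)
  have hc := cosh_pos (3 * x / 2)
  have hcube : (soliton x * exp |x|) ^ 3 ≤ 3 ^ 3 := calc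
    (soliton x * exp |x|) ^ 3 = 5 / 2 * exp (3 * |x| / 2) ^ 2 / cosh (3 * x / 2) ^ 2 := by
      rw [mul_pow, soliton_cube, ← exp_nat_mul, ← exp_nat_mul]; ring_nf
    _ ≤ 5 / 2 * (2 * cosh (3 * x / 2)) ^ 2 / cosh (3 * x / 2) ^ 2 := by gcongr
    _ ≤ 3 ^ 3 := by field_simp; norm_num
  calc soliton x = soliton x * exp |x| * exp (-|x|) := by rw [mul_assoc, ← exp_add]; simp
    _ ≤ 3 * exp (-|x|) := by
      gcongr; exact le_of_pow_le_pow_left₀ three_ne_zero (by norm_num) hcube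

theorem continuous_soliton : Continuous soliton :=
  continuous_iff_continuousAt.2 fun x => (hasDerivAt_soliton x).continuousAt

theorem norm_soliton_sq_le (x : ℝ) : ‖soliton x ^ 2‖ ≤ 9 * exp (-2 * |x|) := by
  rw [Real.norm_of_nonneg (sq_nonneg _), show -2 * |x| = -|x| + -|x| by ring, exp_add]
  nlinarith [soliton_le x, soliton_pos x]

end QuarticGKdV

open QuarticGKdV in
/-- For the quartic soliton `Q(x) = (5/2)^{1/3} cosh(3x/2)^{-2/3}`, the function
`A = (1/3) Q' ∫₀ˣ Q² - (2/3) Q³` solves `A'' - A + 4Q³A + 4Q³ = 0`, is even,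
and decays exponentially. -/
theorem quartic_A_equation (Q A : ℝ → ℝ)
    (hQ : ∀ x : ℝ, Q x = ((5 : ℝ) / 2) ^ ((1 : ℝ) / 3) *
      (Real.cosh (3 * x / 2)) ^ (-(2 : ℝ) / 3))
    (hA : ∀ x : ℝ, A x =
      (1 / 3) * deriv Q x * (∫ s in (0 : ℝ)..x, (Q s) ^ 2) - (2 / 3) * Q x ^ 3) :
    (∀ x : ℝ, deriv (deriv A) x - A x + 4 * Q x ^ 3 * A x + 4 * Q x ^ 3 = 0) ∧
    (∀ x : ℝ, A (-x) = A x) ∧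
    (∃ C γ : ℝ, 0 < C ∧ 0 < γ ∧ ∀ x : ℝ, |A x| ≤ C * Real.exp (-γ * |x|)) := by
  obtain rfl : Q = soliton := funext hQ
  obtain rfl : A = profileA soliton solitonDeriv fun x => ∫ s in (0 : ℝ)..x, soliton s ^ 2 :=
    funext fun x => by rw [hA, deriv_soliton, profileA]
  have hsq : Continuous fun s => soliton s ^ 2 := continuous_soliton.pow 2
  refine ⟨profileA_linearized_eq hasDerivAt_soliton hasDerivAt_solitonDeriv
      (fun x => (hsq.integral_hasStrictDerivAt 0 x).hasDerivAt) solitonDeriv_sq,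
    profileA_neg soliton_neg solitonDeriv_neg
      (intervalIntegral.integral_zero_neg_of_even fun s => by rw [soliton_neg]),
    3 * (9 / 2) / 3 + 2 * 3 ^ 3 / 3, 1, by norm_num, one_pos, fun x => ?_⟩
  rw [neg_one_mul]
  exact abs_profileA_le (soliton_pos x).le (soliton_le x) (abs_solitonDeriv_le x)
    (norm_integral_le_of_norm_le_exp two_pos hsq norm_soliton_sq_le x)
end

section
/- Let Q be the quartic gKdV soliton (Q'' - Q + Q^4 = 0, positive, decaying) and A(x) = (1/3)Q'(x)∫₀ˣQ² - (2/3)Q³(x). Then ∫_ℝ (3A'' + 4Q³A + 4Q³) Q = (1/6) ∫_ℝ Q, and in particular this integral is nonzero. -/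
open Real MeasureTheory Filter

/-- For the quartic soliton `Q` and `A = (1/3)Q'∫₀ˣQ² - (2/3)Q³`:
`∫ (3A'' + 4Q³A + 4Q³) Q = (1/6) ∫ Q ≠ 0`. -/
theorem quartic_orthogonality_obstruction (Q A : ℝ → ℝ)
    (hsm : ContDiff ℝ (⊤ : ℕ∞) Q) (hpos : ∀ x, 0 < Q x)
    (hODE : ∀ x, deriv (deriv Q) x - Q x + Q x ^ 4 = 0)
    (hQtop : Tendsto Q atTop (nhds 0)) (hQbot : Tendsto Q atBot (nhds 0))
    (hQ'top : Tendsto (deriv Q) atTop (nhds 0)) (hQ'bot : Tendsto (deriv Q) atBot (nhds 0))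
    (hint0 : Integrable Q)
    (hintA : Integrable (fun x =>
      (3 * deriv (deriv A) x + 4 * Q x ^ 3 * A x + 4 * Q x ^ 3) * Q x))
    (hA : ∀ x : ℝ, A x =
      (1 / 3) * deriv Q x * (∫ s in (0 : ℝ)..x, (Q s) ^ 2) - (2 / 3) * Q x ^ 3) :
    (∫ x : ℝ, (3 * deriv (deriv A) x + 4 * Q x ^ 3 * A x + 4 * Q x ^ 3) * Q x)
      = (1 / 6) * (∫ x : ℝ, Q x) ∧
    (∫ x : ℝ, (3 * deriv (deriv A) x + 4 * Q x ^ 3 * A x + 4 * Q x ^ 3) * Q x) ≠ 0 := by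
  set R : ℝ → ℝ := deriv Q with hRdef
  set P : ℝ → ℝ := fun t => ∫ s in (0 : ℝ)..t, Q s ^ 2 with hPdef
  have hQd : Differentiable ℝ Q := hsm.differentiable (by simp)
  have hRsm : ContDiff ℝ (⊤ : ℕ∞) R := (contDiff_infty_iff_deriv.mp (hsm.of_le (mod_cast le_top))).2
  have hRd : Differentiable ℝ R := hRsm.differentiable (by simp)
  have hQhd : ∀ x, HasDerivAt Q (R x) x := fun x => (hQd x).hasDerivAt
  have hRhd : ∀ x, HasDerivAt R (Q x - Q x ^ 4) x := by
    intro x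
    have h := (hRd x).hasDerivAt
    have h2 : deriv R x = Q x - Q x ^ 4 := by have := hODE x; linarith
    rwa [h2] at h
  have hQ2cont : Continuous fun s => Q s ^ 2 := hsm.continuous.pow 2
  have hP : ∀ x, HasDerivAt P (Q x ^ 2) x := by
    intro x
    exact intervalIntegral.integral_hasDerivAt_right
      (hQ2cont.intervalIntegrable _ _)
      (hQ2cont.stronglyMeasurableAtFilter _ _)
      hQ2cont.continuousAt
  -- energy identity
  have hEhd : ∀ x, HasDerivAt (fun t => R t ^ 2 - Q t ^ 2 + 2/5 * Q t ^ 5) 0 x := by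
    intro x
    have h := (((hRhd x).pow 2).sub ((hQhd x).pow 2)).add (((hQhd x).pow 5).const_mul (2/5 : ℝ))
    refine h.congr_deriv (Eq.symm ?_)
    push_cast
    ring
  have hEconst : ∀ x, R x ^ 2 - Q x ^ 2 + 2/5 * Q x ^ 5
      = R 0 ^ 2 - Q 0 ^ 2 + 2/5 * Q 0 ^ 5 := by
    intro x
    exact is_const_of_deriv_eq_zero (fun y => (hEhd y).differentiableAt)
      (fun y => (hEhd y).deriv) x 0
  have hEtop : Tendsto (fun t => R t ^ 2 - Q t ^ 2 + 2/5 * Q t ^ 5) atTop (nhds 0) := by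
    have h := ((hQ'top.pow 2).sub (hQtop.pow 2)).add ((hQtop.pow 5).const_mul (2/5 : ℝ))
    convert h using 2
    norm_num
  have hE0 : R 0 ^ 2 - Q 0 ^ 2 + 2/5 * Q 0 ^ 5 = 0 := by
    refine tendsto_nhds_unique ?_ hEtop
    have : (fun t => R t ^ 2 - Q t ^ 2 + 2/5 * Q t ^ 5)
        = fun _ => R 0 ^ 2 - Q 0 ^ 2 + 2/5 * Q 0 ^ 5 := funext hEconst
    rw [this]
    exact tendsto_const_nhds
  have hE : ∀ x, R x ^ 2 = Q x ^ 2 - 2/5 * Q x ^ 5 := by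
    intro x
    have := hEconst x
    rw [hE0] at this
    linarith
  -- A and its derivatives
  have hA' : ∀ x, A x = 1/3 * (R x * P x) - 2/3 * Q x ^ 3 := by
    intro x
    rw [hA x]; ring
  have hAfun : A = fun x => 1/3 * (R x * P x) - 2/3 * Q x ^ 3 := funext hA'
  have hA1 : ∀ x, HasDerivAt A
      (1/3 * ((Q x - Q x ^ 4) * P x + R x * Q x ^ 2) - 2 * (Q x ^ 2 * R x)) x := by
    intro x
    rw [hAfun]
    have h := (((hRhd x).mul (hP x)).const_mul (1/3 : ℝ)).sub
      (((hQhd x).pow 3).const_mul (2/3 : ℝ))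
    refine h.congr_deriv (Eq.symm ?_)
    push_cast
    ring
  have hdA : deriv A = fun x =>
      1/3 * ((Q x - Q x ^ 4) * P x + R x * Q x ^ 2) - 2 * (Q x ^ 2 * R x) :=
    funext fun x => (hA1 x).deriv
  have hA2 : ∀ x, HasDerivAt (deriv A)
      (1/3 * ((R x - 4 * Q x ^ 3 * R x) * P x) - 4/3 * (Q x ^ 2 * (Q x - Q x ^ 4))
        - 10/3 * (Q x * R x ^ 2)) x := by
    intro x
    rw [hdA]
    have h := (((((hQhd x).sub ((hQhd x).pow 4)).mul (hP x)).add
        ((hRhd x).mul ((hQhd x).pow 2))).const_mul (1/3 : ℝ)).sub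
      ((((hQhd x).pow 2).mul (hRhd x)).const_mul (2 : ℝ))
    refine h.congr_deriv (Eq.symm ?_)
    push_cast
    simp only [Pi.pow_apply, Pi.sub_apply]
    ring
  have hddA : ∀ x, deriv (deriv A) x =
      1/3 * ((R x - 4 * Q x ^ 3 * R x) * P x) - 4/3 * (Q x ^ 2 * (Q x - Q x ^ 4))
        - 10/3 * (Q x * R x ^ 2) := fun x => (hA2 x).deriv
  -- the magic antiderivative
  have hGhd : ∀ x, HasDerivAt
      (fun t => 1/2 * (Q t ^ 2 * P t) - 8/15 * (Q t ^ 5 * P t) - 8/3 * (Q t ^ 3 * R t)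
        - 1/6 * R t)
      ((3 * deriv (deriv A) x + 4 * Q x ^ 3 * A x + 4 * Q x ^ 3) * Q x - 1/6 * Q x) x := by
    intro x
    have t1 := (((hQhd x).pow 2).mul (hP x)).const_mul (1/2 : ℝ)
    have t2 := (((hQhd x).pow 5).mul (hP x)).const_mul (8/15 : ℝ)
    have t3 := (((hQhd x).pow 3).mul (hRhd x)).const_mul (8/3 : ℝ)
    have t4 := (hRhd x).const_mul (1/6 : ℝ)
    have h := ((t1.sub t2).sub t3).sub t4
    refine h.congr_deriv (Eq.symm ?_)
    rw [hddA x, hA' x]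
    push_cast
    simp only [Pi.pow_apply, Pi.sub_apply]
    linear_combination (-2 * Q x ^ 2) * hE x
  -- limits of P
  have hQbdd : ∃ C, ∀ x, ‖Q x‖ ≤ C := by
    have hQc : Tendsto Q (cocompact ℝ) (nhds 0) := by
      rw [cocompact_eq_atBot_atTop]
      exact tendsto_sup.mpr ⟨hQbot, hQtop⟩
    have h1 : ∀ᶠ x in cocompact ℝ, ‖Q x‖ ≤ 1 :=
      (((by simpa using hQc.norm : Tendsto (fun x => ‖Q x‖) (cocompact ℝ) (nhds 0)).eventually_lt_const (by norm_num : (0:ℝ) < 1)).mono fun x hx => hx.le)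
    obtain ⟨K, hKc, hK⟩ := mem_cocompact.mp h1
    obtain ⟨C, hC⟩ := hKc.exists_bound_of_continuousOn hsm.continuous.continuousOn
    refine ⟨max C 1, fun x => ?_⟩
    by_cases hx : x ∈ K
    · exact le_max_of_le_left (hC x hx)
    · exact le_max_of_le_right (hK hx)
  have hQ2int : Integrable (fun x => Q x ^ 2) := by
    have h : Integrable (fun x => Q x * Q x) :=
      hint0.bdd_mul hsm.continuous.aestronglyMeasurable (ae_of_all _ hQbdd.choose_spec)
    have he : (fun x => Q x ^ 2) = fun x => Q x * Q x := by funext x; ring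
    rw [he]; exact h
  have hPtop : Tendsto P atTop (nhds (∫ x in Set.Ioi (0:ℝ), Q x ^ 2)) :=
    intervalIntegral_tendsto_integral_Ioi 0 hQ2int.integrableOn tendsto_id
  have hPbot : Tendsto P atBot (nhds (-∫ x in Set.Iic (0:ℝ), Q x ^ 2)) := by
    have h := (intervalIntegral_tendsto_integral_Iic 0 hQ2int.integrableOn tendsto_id).neg
    exact h.congr fun t => (intervalIntegral.integral_symm t 0).symm
  -- limits of G
  have hGtop : Tendsto
      (fun t => 1/2 * (Q t ^ 2 * P t) - 8/15 * (Q t ^ 5 * P t) - 8/3 * (Q t ^ 3 * R t)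
        - 1/6 * R t) atTop (nhds 0) := by
    have h := (((((hQtop.pow 2).mul hPtop).const_mul (1/2 : ℝ)).sub
        (((hQtop.pow 5).mul hPtop).const_mul (8/15 : ℝ))).sub
        (((hQtop.pow 3).mul hQ'top).const_mul (8/3 : ℝ))).sub (hQ'top.const_mul (1/6 : ℝ))
    convert h using 2
    norm_num
  have hGbot : Tendsto
      (fun t => 1/2 * (Q t ^ 2 * P t) - 8/15 * (Q t ^ 5 * P t) - 8/3 * (Q t ^ 3 * R t)
        - 1/6 * R t) atBot (nhds 0) := by
    have h := (((((hQbot.pow 2).mul hPbot).const_mul (1/2 : ℝ)).sub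
        (((hQbot.pow 5).mul hPbot).const_mul (8/15 : ℝ))).sub
        (((hQbot.pow 3).mul hQ'bot).const_mul (8/3 : ℝ))).sub (hQ'bot.const_mul (1/6 : ℝ))
    convert h using 2
    norm_num
  -- FTC on the whole line
  have hF'int : Integrable (fun x =>
      (3 * deriv (deriv A) x + 4 * Q x ^ 3 * A x + 4 * Q x ^ 3) * Q x - 1/6 * Q x) :=
    hintA.sub (hint0.const_mul (1/6))
  have h1 := integral_Ioi_of_hasDerivAt_of_tendsto' (a := 0)
    (fun x _ => hGhd x) hF'int.integrableOn hGtop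
  have h2 := integral_Iic_of_hasDerivAt_of_tendsto' (a := 0)
    (fun x _ => hGhd x) hF'int.integrableOn hGbot
  have hzero : (∫ x : ℝ,
      ((3 * deriv (deriv A) x + 4 * Q x ^ 3 * A x + 4 * Q x ^ 3) * Q x - 1/6 * Q x)) = 0 := by
    rw [← intervalIntegral.integral_Iic_add_Ioi (b := 0) hF'int.integrableOn hF'int.integrableOn, h1, h2]
    ring
  have hsub := integral_sub hintA (hint0.const_mul (1/6))
  have key : (∫ x : ℝ, (3 * deriv (deriv A) x + 4 * Q x ^ 3 * A x + 4 * Q x ^ 3) * Q x)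
      = 1/6 * ∫ x : ℝ, Q x := by
    have h3 : (∫ x : ℝ, (1:ℝ)/6 * Q x) = 1/6 * ∫ x : ℝ, Q x := by
      rw [MeasureTheory.integral_const_mul]
    rw [hsub, h3] at hzero
    linarith [hzero]
  have hQpos : 0 < ∫ x : ℝ, Q x := by
    refine (integral_pos_iff_support_of_nonneg (fun x => (hpos x).le) hint0).mpr ?_
    have hsupp : Function.support Q = Set.univ := Set.eq_univ_of_forall fun x => (hpos x).ne'
    rw [hsupp]
    simp
  refine ⟨key, ?_⟩
  rw [key]
  positivity
end

section
/- Let B(t,x) be the mKdV breather with parameters α, β > 0 and shifts x₁, x₂, and let B̃(t,x) = 2√2 arctan((β/α) sin(αy₁)/cosh(βy₂)) be its primitive (so B = B̃_x). Define 𝓜 = (1/2)∫_{-∞}^x B². Then B satisfies the pointwise identity B_x² + (1/2)B⁴ + 2B B̃_t - 2𝓜_t = 0. -/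
/-!
In the phases `u = x + δt + x₁`, `v = x + γt + x₂` all quantities are rational expressions in
`sin (αu), cos (αu), cosh (βv), sinh (βv)` over `D = α² cosh² (βv) + β² sin² (αu)`.
The mass has the closed form `𝓜 = 2αβ (α cosh sinh + β sin cos) / D + 2β`: its `x`-derivative is
`B² / 2` and it tends to `0` at `-∞` because `D` grows like `cosh² (βv)`, so the improper integral
is evaluated by the fundamental theorem of calculus. After clearing `D`, the identity becomes a
polynomial identity modulo `sin² + cos² = 1`, `cosh² - sinh² = 1` and `√2 ² = 2`.
-/

open Real MeasureTheory Filter Topology Set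

theorem Real.tendsto_cosh_atBot : Tendsto cosh atBot atTop := by
  refine tendsto_atTop_mono (fun x => ?_) <|
    (tendsto_exp_atTop.comp tendsto_neg_atBot_atTop).atTop_div_const two_pos
  rw [Function.comp_apply, cosh_eq]
  linarith [exp_pos x]

theorem Real.cosh_mul_exp_le_one {w : ℝ} (hw : w ≤ 0) : cosh w * exp w ≤ 1 := by
  have h : cosh w * exp w = (exp w ^ 2 + 1) / 2 := by
    rw [cosh_eq, exp_neg]; field_simp
  rw [h]
  nlinarith [exp_le_one_iff.2 hw, exp_pos w]

theorem integral_Iio_of_hasDerivAt_of_nonneg {f f' : ℝ → ℝ} {x m : ℝ}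
    (hderiv : ∀ s ∈ Iic x, HasDerivAt f (f' s) s) (hf' : ∀ s ∈ Iio x, 0 ≤ f' s)
    (hf : Tendsto f atBot (𝓝 m)) : ∫ s in Iio x, f' s = f x - m := by
  have hderiv_neg : ∀ u ∈ Ici (-x), HasDerivAt (fun u => -f (-u)) (f' (-u)) u := by
    intro u hu
    have h := ((hderiv (-u) (by simpa [neg_le] using hu)).comp u (hasDerivAt_neg u)).neg
    rwa [mul_neg_one, neg_neg] at h
  have hf'_neg : ∀ u ∈ Ioi (-x), 0 ≤ f' (-u) := fun u hu => hf' _ (by simpa [neg_lt] using hu)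
  have hf_neg : Tendsto (fun u => -f (-u)) atTop (𝓝 (-m)) :=
    (hf.comp tendsto_neg_atTop_atBot).neg
  rw [← integral_Iic_eq_integral_Iio, ← neg_neg x, ← integral_comp_neg_Ioi,
    integral_Ioi_of_hasDerivAt_of_nonneg' hderiv_neg hf'_neg hf_neg, neg_neg]
  ring

namespace MKdVBreather

/- `primitive`, `breather` and `mass` are `B̃`, `B` and `𝓜` as functions of the phases `(u, v)`.
`primitiveDeriv a b p' q'` and `massDeriv a b p' q'` are the derivatives of `primitive` and `mass`
along the direction `(p', q')`: `∂ₓ` is the direction `(1, 1)` and `∂ₜ` the direction `(δ, γ)`. -/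

noncomputable def denom (a b u v : ℝ) : ℝ := a ^ 2 * cosh (b * v) ^ 2 + b ^ 2 * sin (a * u) ^ 2

noncomputable def primitive (a b u v : ℝ) : ℝ :=
  2 * √2 * arctan (b / a * sin (a * u) / cosh (b * v))

noncomputable def primitiveDeriv (a b p' q' u v : ℝ) : ℝ :=
  2 * √2 * a * b * (p' * a * cos (a * u) * cosh (b * v) - q' * b * sin (a * u) * sinh (b * v)) /
    denom a b u v

noncomputable def breather (a b u v : ℝ) : ℝ :=
  2 * √2 * a * b * (a * cos (a * u) * cosh (b * v) - b * sin (a * u) * sinh (b * v)) /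
    denom a b u v

noncomputable def breatherDerivX (a b u v : ℝ) : ℝ :=
  2 * √2 * a * b * (-(a ^ 2 + b ^ 2) * sin (a * u) * cosh (b * v) * denom a b u v -
      2 * a * b * (a * cos (a * u) * cosh (b * v) - b * sin (a * u) * sinh (b * v)) *
        (a * cosh (b * v) * sinh (b * v) + b * sin (a * u) * cos (a * u))) /
    denom a b u v ^ 2

noncomputable def mass (a b u v : ℝ) : ℝ :=
  2 * a * b * (a * cosh (b * v) * sinh (b * v) + b * sin (a * u) * cos (a * u)) / denom a b u v +
    2 * b

noncomputable def massDeriv (a b p' q' u v : ℝ) : ℝ :=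
  2 * a ^ 2 * b ^ 2 * ((q' * (sinh (b * v) ^ 2 + cosh (b * v) ^ 2) +
      p' * (cos (a * u) ^ 2 - sin (a * u) ^ 2)) * denom a b u v -
    2 * (a * cosh (b * v) * sinh (b * v) + b * sin (a * u) * cos (a * u)) *
      (q' * a * cosh (b * v) * sinh (b * v) + p' * b * sin (a * u) * cos (a * u))) /
    denom a b u v ^ 2

variable {a b : ℝ}

theorem denom_pos (ha : a ≠ 0) (u v : ℝ) : 0 < denom a b u v := by
  unfold denom; positivity

variable {p q : ℝ → ℝ} {p' q' s : ℝ}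

theorem hasDerivAt_denom (hp : HasDerivAt p p' s) (hq : HasDerivAt q q' s) :
    HasDerivAt (fun s => denom a b (p s) (q s)) (2 * a * b *
      (q' * a * cosh (b * q s) * sinh (b * q s) + p' * b * sin (a * p s) * cos (a * p s))) s := by
  refine ((((hq.const_mul b).cosh.pow 2).const_mul (a ^ 2)).add
    (((hp.const_mul a).sin.pow 2).const_mul (b ^ 2))).congr_deriv ?_
  norm_num
  ring

theorem hasDerivAt_primitive (ha : a ≠ 0) (hp : HasDerivAt p p' s) (hq : HasDerivAt q q' s) :
    HasDerivAt (fun s => primitive a b (p s) (q s)) (primitiveDeriv a b p' q' (p s) (q s)) s := by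
  have hD := denom_pos (b := b) ha (p s) (q s)
  refine ((((hp.const_mul a).sin.const_mul (b / a)).div (hq.const_mul b).cosh
    (cosh_pos _).ne').arctan).const_mul (2 * √2) |>.congr_deriv ?_
  unfold primitiveDeriv denom at *
  simp only [Pi.div_apply]
  field_simp

theorem primitiveDeriv_one_one : primitiveDeriv a b 1 1 = breather a b := by
  ext u v; simp only [primitiveDeriv, breather, one_mul]

theorem hasDerivAt_breather (ha : a ≠ 0) (hp : HasDerivAt p 1 s) (hq : HasDerivAt q 1 s) :
    HasDerivAt (fun s => breather a b (p s) (q s)) (breatherDerivX a b (p s) (q s)) s := by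
  have hD := denom_pos (b := b) ha (p s) (q s)
  have hpa := hp.const_mul a
  have hqb := hq.const_mul b
  refine (((((hpa.cos.const_mul a).mul hqb.cosh).sub ((hpa.sin.const_mul b).mul hqb.sinh)).const_mul
    (2 * √2 * a * b)).div (hasDerivAt_denom hp hq) hD.ne').congr_deriv ?_
  unfold breatherDerivX
  simp only [Pi.mul_apply, Pi.sub_apply]
  field_simp
  ring

theorem hasDerivAt_mass (ha : a ≠ 0) (hp : HasDerivAt p p' s) (hq : HasDerivAt q q' s) :
    HasDerivAt (fun s => mass a b (p s) (q s)) (massDeriv a b p' q' (p s) (q s)) s := by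
  have hD := denom_pos (b := b) ha (p s) (q s)
  have hpa := hp.const_mul a
  have hqb := hq.const_mul b
  refine (((((hqb.cosh.const_mul a).mul hqb.sinh).add ((hpa.sin.const_mul b).mul hpa.cos)).const_mul
    (2 * a * b)).div (hasDerivAt_denom hp hq) hD.ne').add_const (2 * b) |>.congr_deriv ?_
  unfold massDeriv
  simp only [Pi.mul_apply, Pi.add_apply]
  field_simp
  ring

theorem massDeriv_one_one (ha : a ≠ 0) (u v : ℝ) :
    massDeriv a b 1 1 u v = breather a b u v ^ 2 / 2 := by
  have hD := denom_pos (b := b) ha u v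
  have hsc := sin_sq_add_cos_sq (a * u)
  have hcs := cosh_sq_sub_sinh_sq (b * v)
  unfold massDeriv breather
  rw [div_pow, mul_pow, mul_pow, mul_pow, mul_pow, sq_sqrt zero_le_two]
  field_simp
  unfold denom
  grind

theorem mass_eq_cosh_mul_exp (ha : a ≠ 0) (u v : ℝ) :
    mass a b u v = 2 * b * (a ^ 2 * (cosh (b * v) * exp (b * v)) +
      a * b * (sin (a * u) * cos (a * u)) + b ^ 2 * sin (a * u) ^ 2) / denom a b u v := by
  have hD := denom_pos (b := b) ha u v
  rw [← cosh_add_sinh]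
  unfold mass
  field_simp
  unfold denom
  ring

theorem abs_mass_le (ha : a ≠ 0) (hb : 0 ≤ b) (u : ℝ) {v : ℝ} (hv : v ≤ 0) :
    |mass a b u v| ≤ 2 * b * (a ^ 2 + |a| * b + b ^ 2) / (a ^ 2 * cosh (b * v) ^ 2) := by
  have hD := denom_pos (b := b) ha u v
  have hE : cosh (b * v) * exp (b * v) ≤ 1 :=
    cosh_mul_exp_le_one (mul_nonpos_of_nonneg_of_nonpos hb hv)
  have hSC : |sin (a * u) * cos (a * u)| ≤ 1 := by
    rw [abs_mul]; exact mul_le_one₀ (abs_sin_le_one _) (abs_nonneg _) (abs_cos_le_one _)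
  have hS := sin_sq_le_one (a * u)
  rw [mass_eq_cosh_mul_exp ha, abs_div, abs_of_pos hD]
  refine div_le_div₀ (by positivity) ?_ (by positivity) ?_
  · rw [abs_mul, abs_of_nonneg (by positivity : 0 ≤ 2 * b)]
    refine mul_le_mul_of_nonneg_left
      ((abs_add_three _ _ _).trans (add_le_add_three ?_ ?_ ?_)) (by positivity)
    · rw [abs_of_nonneg (by positivity)]
      exact mul_le_of_le_one_right (sq_nonneg a) hE
    · rw [abs_mul, abs_mul, abs_of_nonneg hb]
      exact mul_le_of_le_one_right (by positivity) hSC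
    · rw [abs_of_nonneg (by positivity)]
      exact mul_le_of_le_one_right (sq_nonneg b) hS
  · unfold denom
    nlinarith [sq_nonneg (b * sin (a * u))]

theorem tendsto_mass_atBot (ha : a ≠ 0) (hb : 0 < b) (c d : ℝ) :
    Tendsto (fun s => mass a b (s + c) (s + d)) atBot (𝓝 0) := by
  have hcosh : Tendsto (fun s => a ^ 2 * cosh (b * (s + d)) ^ 2) atBot atTop :=
    ((tendsto_pow_atTop two_ne_zero).comp (tendsto_cosh_atBot.comp
      ((tendsto_atBot_add_const_right _ d tendsto_id).const_mul_atBot hb))).const_mul_atTop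
      (by positivity)
  refine squeeze_zero_norm' ?_
    ((tendsto_const_nhds (x := 2 * b * (a ^ 2 + |a| * b + b ^ 2))).div_atTop hcosh)
  filter_upwards [eventually_le_atBot (-d)] with s hs
  exact abs_mass_le ha hb.le _ (by linarith)

theorem integral_Iio_breather_sq (ha : a ≠ 0) (hb : 0 < b) (c d x : ℝ) :
    ∫ s in Iio x, breather a b (s + c) (s + d) ^ 2 = 2 * mass a b (x + c) (x + d) := by
  have hderiv : ∀ s ∈ Iic x, HasDerivAt (fun s => 2 * mass a b (s + c) (s + d))
      (breather a b (s + c) (s + d) ^ 2) s := fun s _ => by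
    have h := (hasDerivAt_mass (b := b) ha ((hasDerivAt_id s).add_const c)
      ((hasDerivAt_id s).add_const d)).const_mul 2
    rwa [massDeriv_one_one ha, mul_div_cancel₀ _ two_ne_zero] at h
  have hlim := (tendsto_mass_atBot ha hb c d).const_mul 2
  rw [mul_zero] at hlim
  rw [integral_Iio_of_hasDerivAt_of_nonneg hderiv (fun s _ => sq_nonneg _) hlim, sub_zero]

theorem breather_identity (ha : a ≠ 0) (u v : ℝ) :
    breatherDerivX a b u v ^ 2 + 1 / 2 * breather a b u v ^ 4 +
      2 * breather a b u v * primitiveDeriv a b (a ^ 2 - 3 * b ^ 2) (3 * a ^ 2 - b ^ 2) u v -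
      2 * massDeriv a b (a ^ 2 - 3 * b ^ 2) (3 * a ^ 2 - b ^ 2) u v = 0 := by
  have hD := denom_pos (b := b) ha u v
  have hsc := sin_sq_add_cos_sq (a * u)
  have hcs := cosh_sq_sub_sinh_sq (b * v)
  have hr := sq_sqrt (zero_le_two (α := ℝ))
  unfold breatherDerivX breather primitiveDeriv massDeriv
  field_simp
  unfold denom
  grind

end MKdVBreather

open MKdVBreather

/-- Pointwise identity for the mKdV breather: `B_x² + (1/2)B⁴ + 2B B̃_t - 2𝓜_t = 0`,
where `B̃` is the primitive of `B` and `𝓜 = (1/2)∫_{-∞}^x B²`. -/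
theorem mKdV_breather_pointwise_identity (α β x₁ x₂ : ℝ) (hα : 0 < α) (hβ : 0 < β)
    (δ γ : ℝ) (hδ : δ = α ^ 2 - 3 * β ^ 2) (hγ : γ = 3 * α ^ 2 - β ^ 2)
    (Btilde B M : ℝ → ℝ → ℝ)
    (hBtilde : ∀ t x : ℝ, Btilde t x = 2 * Real.sqrt 2 *
      Real.arctan ((β / α) * Real.sin (α * (x + δ * t + x₁)) /
        Real.cosh (β * (x + γ * t + x₂))))
    (hB : ∀ t x : ℝ, B t x = deriv (Btilde t) x)
    (hM : ∀ t x : ℝ, M t x = (1 / 2) * ∫ s in Set.Iio x, (B t s) ^ 2) :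
    ∀ t x : ℝ,
      (deriv (B t) x) ^ 2 + (1 / 2) * (B t x) ^ 4 +
        2 * B t x * deriv (fun t' : ℝ => Btilde t' x) t -
        2 * deriv (fun t' : ℝ => M t' x) t = 0 := by
  intro t x
  have hx : ∀ c e τ y : ℝ, HasDerivAt (fun s => s + c * τ + e) 1 y := fun _ _ _ y =>
    ((hasDerivAt_id y).add_const _).add_const _
  have ht : ∀ c e τ y : ℝ, HasDerivAt (fun τ => y + c * τ + e) c τ := fun c e τ y => by
    simpa using (((hasDerivAt_id τ).const_mul c).const_add y).add_const e
  have hBtilde' : Btilde = fun t x => primitive α β (x + δ * t + x₁) (x + γ * t + x₂) :=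
    funext₂ hBtilde
  have hB' : B = fun t x => breather α β (x + δ * t + x₁) (x + γ * t + x₂) := by
    ext t x
    rw [hB, hBtilde', ← primitiveDeriv_one_one]
    exact (hasDerivAt_primitive hα.ne' (hx δ x₁ t x) (hx γ x₂ t x)).deriv
  have hM' : M = fun t x => mass α β (x + δ * t + x₁) (x + γ * t + x₂) := by
    ext t x
    rw [hM, hB']
    simp only [add_assoc]
    rw [integral_Iio_breather_sq hα.ne' hβ]
    ring
  rw [hB', hBtilde', hM', (hasDerivAt_breather hα.ne' (hx δ x₁ t x) (hx γ x₂ t x)).deriv,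
    (hasDerivAt_primitive hα.ne' (ht δ x₁ t x) (ht γ x₂ t x)).deriv,
    (hasDerivAt_mass hα.ne' (ht δ x₁ t x) (ht γ x₂ t x)).deriv]
  subst hδ hγ
  exact breather_identity hα.ne' _ _
end

section
/- Let B be the mKdV breather with parameters α, β > 0. Assume B satisfies the three identities: (i) B̃_t + B_xx + B³ = 0, (ii) B_x² + (1/2)B⁴ + 2BB̃_t - 2𝓜_t = 0, and (iii) B_xt + 2𝓜_t B = 2(β² - α²)B̃_t + (α² + β²)²B. Then B satisfies the fourth-order elliptic equation G[B] := B_xxxx - 2(β² - α²)(B_xx + B³) + (α² + β²)²B + 5B B_x² + 5B² B_xx + (3/2)B⁵ = 0. -/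
open Real

/-- Algebraic derivation of the fourth-order elliptic equation `G[B] = 0` satisfied by the
mKdV breather, from the three identities (i) `B̃_t + B_xx + B³ = 0`,
(ii) `B_x² + (1/2)B⁴ + 2BB̃_t - 2𝓜_t = 0`, and
(iii) `B_xt + 2𝓜_t B = 2(β² - α²)B̃_t + (α² + β²)²B`.
Here `Bt` denotes `B̃_t` and `Mt` denotes `𝓜_t` as functions of `x` (time frozen). -/
theorem breather_fourth_order_equation (α β : ℝ) (hα : 0 < α) (hβ : 0 < β)
    (B Bt Mt : ℝ → ℝ)
    (hsmB : ContDiff ℝ (⊤ : ℕ∞) B) (hsmBt : ContDiff ℝ (⊤ : ℕ∞) Bt) (hsmMt : ContDiff ℝ (⊤ : ℕ∞) Mt)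
    (h1 : ∀ x : ℝ, Bt x + deriv (deriv B) x + B x ^ 3 = 0)
    (h2 : ∀ x : ℝ, (deriv B x) ^ 2 + (1 / 2) * B x ^ 4 + 2 * B x * Bt x - 2 * Mt x = 0)
    (h3 : ∀ x : ℝ, deriv (deriv Bt) x + 2 * Mt x * B x =
      2 * (β ^ 2 - α ^ 2) * Bt x + (α ^ 2 + β ^ 2) ^ 2 * B x) :
    ∀ x : ℝ,
      deriv^[4] B x - 2 * (β ^ 2 - α ^ 2) * (deriv (deriv B) x + B x ^ 3) +
        (α ^ 2 + β ^ 2) ^ 2 * B x + 5 * B x * (deriv B x) ^ 2 +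
        5 * B x ^ 2 * deriv (deriv B) x + (3 / 2) * B x ^ 5 = 0 := by
  intro x
  have hsm : ContDiff ℝ (⊤ : ℕ∞) B := hsmB.of_le (mod_cast le_top)
  have hit : ∀ n : ℕ, Differentiable ℝ (deriv^[n] B) := fun n =>
    (hsm.iterate_deriv n).differentiable (by simp)
  have hB0 : Differentiable ℝ B := hit 0
  have hB1 : Differentiable ℝ (deriv B) := hit 1
  have hB2 : Differentiable ℝ (deriv (deriv B)) := by
    have := hit 2; simpa [Function.iterate_succ, Function.comp] using this
  have hB3 : Differentiable ℝ (deriv (deriv (deriv B))) := by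
    have := hit 3; simpa [Function.iterate_succ, Function.comp] using this
  have hBt' : Bt = fun y => -(deriv (deriv B) y + B y ^ 3) := by
    funext y
    have := h1 y
    linarith
  have e1 : deriv Bt = fun y => -(deriv (deriv (deriv B)) y + 3 * B y ^ 2 * deriv B y) := by
    rw [hBt']
    funext y
    rw [deriv.fun_neg]
    congr 1
    rw [deriv_fun_add (hB2 y) (show DifferentiableAt ℝ (fun y => B y ^ 3) y from (hB0 y).pow 3)]
    congr 1
    have := deriv_fun_pow (hB0 y) 3
    simpa [mul_comm, mul_assoc, mul_left_comm] using this
  have e2 : deriv (deriv Bt) x =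
      -(deriv (deriv (deriv (deriv B))) x + 6 * B x * (deriv B x) ^ 2 +
        3 * B x ^ 2 * deriv (deriv B) x) := by
    rw [e1]
    rw [deriv.fun_neg]
    have hd1 : DifferentiableAt ℝ (fun y => B y ^ 2) x := (hB0 x).pow 2
    have hd2 : DifferentiableAt ℝ (fun y => 3 * B y ^ 2 * deriv B y) x :=
      ((differentiableAt_const (3:ℝ)).mul hd1).mul (hB1 x)
    rw [deriv_fun_add (hB3 x) hd2]
    rw [deriv_fun_mul (show DifferentiableAt ℝ (fun y => 3 * B y ^ 2) x from (differentiableAt_const (3:ℝ)).mul hd1) (hB1 x)]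
    rw [deriv_const_mul 3 hd1]
    have := deriv_fun_pow (hB0 x) 2
    rw [this]
    ring
  have h4 : deriv^[4] B x = deriv (deriv (deriv (deriv B))) x := by
    simp [Function.iterate_succ, Function.comp]
  rw [h4]
  have heq3 := h3 x
  rw [e2] at heq3
  linear_combination (2 * B x ^ 2 - 2 * (β ^ 2 - α ^ 2)) * h1 x + (-(B x)) * h2 x + (-1) * heq3
end

section
/- Let α, β > 0, x₁, x₂ ∈ ℝ, y₁ = x + x₁, y₂ = x + x₂, and suppose x₁ ≠ x₂ + (π/α)(k + 1/2) for all k ∈ ℤ. Define the complex-valued soliton Q(x) = 2√2(β + iα)e^{βy₂ + iαy₁}/(1 + e^{2(βy₂ + iαy₁)}). Then Q satisfies Q'' - (β + iα)²Q + Q³ = 0 and (Q')² - (β + iα)²Q² + (1/2)Q⁴ = 0 for all x ∈ ℝ. -/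
open Complex

/-!
Writing `u x = exp (λ x + c)` with `λ = β + iα`, so that `u' = λ u`, the soliton is
`Q = C u / (1 + u²)` with `C² = 8 λ²`. Differentiating this rational expression in `u` twice gives
`Q' = C λ u (1 - u²) / (1 + u²)²` and `Q'' = C λ² (u - 6u³ + u⁵) / (1 + u²)³`, and both equations
become polynomial identities in `u` once `C²` is replaced by `8 λ²`. The nondegeneracy condition is
exactly what keeps `1 + u²` away from zero: `u² = -1` forces `Re (λ x + c) = 0`, i.e. `x = -x₂`,
and then `α (x₁ - x₂) ∈ π (ℤ + 1/2)`.
-/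

theorem exists_im_eq_of_cexp_two_mul_eq_neg_one {w : ℂ} (h : cexp (2 * w) = -1) :
    w.re = 0 ∧ ∃ n : ℤ, w.im = (n + 1 / 2) * Real.pi := by
  have hexp : cexp (2 * w + Real.pi * I) = 1 := by
    rw [exp_add, exp_pi_mul_I, h]; ring
  obtain ⟨n, hn⟩ := exp_eq_one_iff.mp hexp
  have hre : 2 * w.re = 0 := by simpa using congrArg re hn
  have him : 2 * w.im + Real.pi = n * (2 * Real.pi) := by simpa using congrArg im hn
  refine ⟨by linarith, n - 1, ?_⟩
  push_cast
  linarith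

theorem one_add_cexp_two_mul_ne_zero {α β x₁ x₂ : ℝ} (hα : α ≠ 0) (hβ : β ≠ 0)
    (hnd : ∀ k : ℤ, x₁ ≠ x₂ + (Real.pi / α) * ((k : ℝ) + 1 / 2)) (x : ℝ) :
    1 + cexp (2 * ((β : ℂ) * ((x : ℂ) + (x₂ : ℂ)) + I * (α : ℂ) * ((x : ℂ) + (x₁ : ℂ)))) ≠ 0 := by
  intro h
  obtain ⟨hre, n, him⟩ := exists_im_eq_of_cexp_two_mul_eq_neg_one (eq_neg_of_add_eq_zero_right h)
  have hx : x + x₂ = 0 := by simpa [hβ] using hre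
  have hαx : α * (x + x₁) = (n + 1 / 2) * Real.pi := by simpa using him
  apply hnd n
  field_simp
  linear_combination 2 * hαx - 2 * α * hx

theorem hasDerivAt_cexp_mul_ofReal_add (a b : ℂ) (x : ℝ) :
    HasDerivAt (fun y : ℝ => cexp (a * y + b)) (a * cexp (a * x + b)) x := by
  simpa [mul_comm] using (((hasDerivAt_id (x : ℂ)).const_mul a).add_const b).cexp.comp_ofReal

/-- With `u = exp (λ x + c)` this is `(C / 2) sech (λ x + c)`. -/
noncomputable def solitonProfile (C : ℂ) (u : ℝ → ℂ) : ℝ → ℂ :=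
  fun x => C * u x / (1 + u x ^ 2)

section solitonProfile

variable {u : ℝ → ℂ} {l C : ℂ}

theorem hasDerivAt_sq_of_hasDerivAt_mul {x : ℝ} (hu : HasDerivAt u (l * u x) x) :
    HasDerivAt (fun y => u y ^ 2) (2 * l * u x ^ 2) x :=
  (hu.pow 2).congr_deriv (by ring)

theorem hasDerivAt_solitonProfile {x : ℝ} (hu : HasDerivAt u (l * u x) x)
    (hne : 1 + u x ^ 2 ≠ 0) :
    HasDerivAt (solitonProfile C u) (C * l * u x * (1 - u x ^ 2) / (1 + u x ^ 2) ^ 2) x :=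
  ((hu.const_mul C).div ((hasDerivAt_sq_of_hasDerivAt_mul hu).const_add 1) hne).congr_deriv
    (by ring)

theorem deriv_solitonProfile (hu : ∀ x, HasDerivAt u (l * u x) x)
    (hne : ∀ x, 1 + u x ^ 2 ≠ 0) :
    deriv (solitonProfile C u) = fun x => C * l * u x * (1 - u x ^ 2) / (1 + u x ^ 2) ^ 2 :=
  funext fun x => (hasDerivAt_solitonProfile (hu x) (hne x)).deriv

theorem hasDerivAt_deriv_solitonProfile (hu : ∀ x, HasDerivAt u (l * u x) x)
    (hne : ∀ x, 1 + u x ^ 2 ≠ 0) (x : ℝ) :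
    HasDerivAt (deriv (solitonProfile C u))
      (C * l ^ 2 * (u x - 6 * u x ^ 3 + u x ^ 5) / (1 + u x ^ 2) ^ 3) x := by
  have hsq := hasDerivAt_sq_of_hasDerivAt_mul (hu x)
  rw [deriv_solitonProfile hu hne]
  refine (((hu x).const_mul (C * l) |>.mul (hsq.const_sub 1)).div
    ((hsq.const_add 1).pow 2) (pow_ne_zero 2 (hne x))).congr_deriv ?_
  simp only [Pi.mul_apply, Pi.pow_apply]
  field_simp [hne x]
  ring

theorem solitonProfile_second_order (hu : ∀ x, HasDerivAt u (l * u x) x)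
    (hne : ∀ x, 1 + u x ^ 2 ≠ 0) (hC : C ^ 2 = 8 * l ^ 2) (x : ℝ) :
    deriv (deriv (solitonProfile C u)) x - l ^ 2 * solitonProfile C u x
      + solitonProfile C u x ^ 3 = 0 := by
  rw [(hasDerivAt_deriv_solitonProfile hu hne x).deriv, solitonProfile]
  field_simp [hne x]
  linear_combination (C * u x ^ 3) * hC

theorem solitonProfile_first_integral (hu : ∀ x, HasDerivAt u (l * u x) x)
    (hne : ∀ x, 1 + u x ^ 2 ≠ 0) (hC : C ^ 2 = 8 * l ^ 2) (x : ℝ) :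
    deriv (solitonProfile C u) x ^ 2 - l ^ 2 * solitonProfile C u x ^ 2
      + 1 / 2 * solitonProfile C u x ^ 4 = 0 := by
  rw [deriv_solitonProfile hu hne, solitonProfile]
  field_simp [hne x]
  linear_combination (C ^ 2 * u x ^ 4) * hC

end solitonProfile

/-- The complex-valued mKdV soliton satisfies `Q'' - (β+iα)²Q + Q³ = 0` and
`(Q')² - (β+iα)²Q² + (1/2)Q⁴ = 0`. -/
theorem complex_soliton_equations (α β x₁ x₂ : ℝ) (hα : 0 < α) (hβ : 0 < β)
    (hnd : ∀ k : ℤ, x₁ ≠ x₂ + (Real.pi / α) * ((k : ℝ) + 1 / 2))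
    (Q : ℝ → ℂ)
    (hQ : ∀ x : ℝ, Q x =
      2 * Real.sqrt 2 * ((β : ℂ) + (α : ℂ) * Complex.I) *
        Complex.exp ((β : ℂ) * ((x : ℂ) + (x₂ : ℂ)) +
          Complex.I * (α : ℂ) * ((x : ℂ) + (x₁ : ℂ))) /
        (1 + Complex.exp (2 * ((β : ℂ) * ((x : ℂ) + (x₂ : ℂ)) +
          Complex.I * (α : ℂ) * ((x : ℂ) + (x₁ : ℂ)))))) :
    (∀ x : ℝ, deriv (deriv Q) x - ((β : ℂ) + (α : ℂ) * Complex.I) ^ 2 * Q x + Q x ^ 3 = 0) ∧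
    (∀ x : ℝ, (deriv Q x) ^ 2 - ((β : ℂ) + (α : ℂ) * Complex.I) ^ 2 * (Q x) ^ 2 +
      (1 / 2) * (Q x) ^ 4 = 0) := by
  have harg : ∀ x : ℝ, (β : ℂ) * ((x : ℂ) + (x₂ : ℂ)) + I * (α : ℂ) * ((x : ℂ) + (x₁ : ℂ)) =
      (β + α * I) * x + (β * x₂ + I * α * x₁) := fun x => by ring
  have hexp_two_mul : ∀ w : ℂ, cexp (2 * w) = cexp w ^ 2 := fun w => by
    rw [← exp_nat_mul]; norm_num
  set u : ℝ → ℂ := fun x => cexp ((β + α * I) * x + (β * x₂ + I * α * x₁))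
  have hQu : Q = solitonProfile (2 * Real.sqrt 2 * (β + α * I)) u := funext fun x => by
    rw [hQ, harg, hexp_two_mul]; rfl
  have hu : ∀ x, HasDerivAt u ((β + α * I) * u x) x := hasDerivAt_cexp_mul_ofReal_add _ _
  have hne : ∀ x, 1 + u x ^ 2 ≠ 0 := fun x => by
    have h := one_add_cexp_two_mul_ne_zero hα.ne' hβ.ne' hnd x
    rwa [harg, hexp_two_mul] at h
  have hC : (2 * Real.sqrt 2 * (β + α * I) : ℂ) ^ 2 = 8 * (β + α * I) ^ 2 := by
    have h2 : ((Real.sqrt 2 : ℝ) : ℂ) ^ 2 = 2 := by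
      norm_cast; exact Real.sq_sqrt zero_le_two
    linear_combination 4 * (β + α * I) ^ 2 * h2
  rw [hQu]
  exact ⟨solitonProfile_second_order hu hne hC, solitonProfile_first_integral hu hne hC⟩
end

section
/- Let B, Q : ℝ → ℂ be smooth with primitives B̃, Q̃ (B = B̃_x, Q = Q̃_x), and let β, α > 0. Suppose: (a) B̃_t + B_xx + B³ = 0, (b) Q̃_t = -(Q_xx + Q³), and (c) (B - Q)/√2 = (β - iα) sin((B̃ + Q̃)/√2). Then B̃_t - Q̃_t + (β - iα)[(B_x + Q_x) cos((B̃ + Q̃)/√2) + ((B² + Q²)/√2) sin((B̃ + Q̃)/√2)] = 0. -/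
open Complex

lemma third_deriv_identity (γ s : ℂ) (f g : ℝ → ℂ)
    (hf : ContDiff ℝ (⊤ : ℕ∞) f) (hg : ContDiff ℝ (⊤ : ℕ∞) g)
    (hc : ∀ y, (deriv f y - deriv g y) / s =
      γ * Complex.sin ((f y + g y) / s)) (x : ℝ) :
    (deriv (deriv (deriv f)) x - deriv (deriv (deriv g)) x) / s =
      γ * (-Complex.sin ((f x + g x) / s) * ((deriv f x + deriv g x) / s) *
            ((deriv f x + deriv g x) / s) +
          Complex.cos ((f x + g x) / s) *
            ((deriv (deriv f) x + deriv (deriv g) x) / s)) := by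
  have hf' : ContDiff ℝ (⊤ : ℕ∞) (deriv f) := (contDiff_infty_iff_deriv.mp hf).2
  have hg' : ContDiff ℝ (⊤ : ℕ∞) (deriv g) := (contDiff_infty_iff_deriv.mp hg).2
  have hf'' : ContDiff ℝ (⊤ : ℕ∞) (deriv (deriv f)) := (contDiff_infty_iff_deriv.mp hf').2
  have hg'' : ContDiff ℝ (⊤ : ℕ∞) (deriv (deriv g)) := (contDiff_infty_iff_deriv.mp hg').2
  have D : ∀ (h : ℝ → ℂ), ContDiff ℝ (⊤ : ℕ∞) h → ∀ y : ℝ, HasDerivAt h (deriv h y) y :=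
    fun h hh y => (hh.differentiable (by simp) y).hasDerivAt
  have E1 : ∀ y, (deriv (deriv f) y - deriv (deriv g) y) / s =
      γ * (Complex.cos ((f y + g y) / s) * ((deriv f y + deriv g y) / s)) := by
    intro y
    have h2 : HasDerivAt (fun z => γ * Complex.sin ((f z + g z) / s))
        (γ * (Complex.cos ((f y + g y) / s) * ((deriv f y + deriv g y) / s))) y :=
      (((Complex.hasDerivAt_sin ((f y + g y) / s)).comp (h := fun z => (f z + g z) / s) y
        (((D f hf y).add (D g hg y)).div_const s)).const_mul γ)
    have h1 : HasDerivAt (fun z => (deriv f z - deriv g z) / s)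
        ((deriv (deriv f) y - deriv (deriv g) y) / s) y :=
      ((D (deriv f) hf' y).sub (D (deriv g) hg' y)).div_const s
    have hfun : (fun z => (deriv f z - deriv g z) / s) =
        fun z => γ * Complex.sin ((f z + g z) / s) := funext hc
    rw [hfun] at h1
    exact h1.unique h2
  have h2 : HasDerivAt
      (fun z => γ * (Complex.cos ((f z + g z) / s) * ((deriv f z + deriv g z) / s)))
      (γ * ((-Complex.sin ((f x + g x) / s) * ((deriv f x + deriv g x) / s)) *
            ((deriv f x + deriv g x) / s) +
          Complex.cos ((f x + g x) / s) *
            ((deriv (deriv f) x + deriv (deriv g) x) / s))) x :=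
    ((((Complex.hasDerivAt_cos ((f x + g x) / s)).comp (h := fun z => (f z + g z) / s) x
        (((D f hf x).add (D g hg x)).div_const s)).mul
      (((D (deriv f) hf' x).add (D (deriv g) hg' x)).div_const s)).const_mul γ)
  have h1 : HasDerivAt (fun z => (deriv (deriv f) z - deriv (deriv g) z) / s)
      ((deriv (deriv (deriv f)) x - deriv (deriv (deriv g)) x) / s) x :=
    ((D (deriv (deriv f)) hf'' x).sub (D (deriv (deriv g)) hg'' x)).div_const s
  have hfun : (fun z => (deriv (deriv f) z - deriv (deriv g) z) / s) =
      fun z => γ * (Complex.cos ((f z + g z) / s) * ((deriv f z + deriv g z) / s)) :=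
    funext E1
  rw [hfun] at h1
  exact h1.unique h2
/-- The spatial Bäcklund relation between the breather and the complex soliton
propagates to the time component. -/
theorem backlund_time_component (α β : ℝ) (hα : 0 < α) (hβ : 0 < β)
    (Btilde Qtilde : ℝ → ℝ → ℂ)
    (hsmB : ContDiff ℝ (⊤ : ℕ∞) (fun q : ℝ × ℝ => Btilde q.1 q.2))
    (hsmQ : ContDiff ℝ (⊤ : ℕ∞) (fun q : ℝ × ℝ => Qtilde q.1 q.2))
    (B Q : ℝ → ℝ → ℂ)
    (hB : ∀ t x : ℝ, B t x = deriv (Btilde t) x)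
    (hQ : ∀ t x : ℝ, Q t x = deriv (Qtilde t) x)
    (ha : ∀ t x : ℝ,
      deriv (fun τ : ℝ => Btilde τ x) t + deriv (deriv (B t)) x + (B t x) ^ 3 = 0)
    (hb : ∀ t x : ℝ,
      deriv (fun τ : ℝ => Qtilde τ x) t = -(deriv (deriv (Q t)) x + (Q t x) ^ 3))
    (hc : ∀ t x : ℝ,
      (B t x - Q t x) / (Real.sqrt 2 : ℂ) =
        ((β : ℂ) - (α : ℂ) * Complex.I) *
          Complex.sin ((Btilde t x + Qtilde t x) / (Real.sqrt 2 : ℂ))) :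
    ∀ t x : ℝ,
      deriv (fun τ : ℝ => Btilde τ x) t - deriv (fun τ : ℝ => Qtilde τ x) t +
        ((β : ℂ) - (α : ℂ) * Complex.I) *
          ((deriv (B t) x + deriv (Q t) x) *
              Complex.cos ((Btilde t x + Qtilde t x) / (Real.sqrt 2 : ℂ)) +
            (((B t x) ^ 2 + (Q t x) ^ 2) / (Real.sqrt 2 : ℂ)) *
              Complex.sin ((Btilde t x + Qtilde t x) / (Real.sqrt 2 : ℂ))) = 0 := by
  intro t x
  set s : ℂ := ((Real.sqrt 2 : ℝ) : ℂ) with hs_def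
  set γ : ℂ := ((β : ℂ) - (α : ℂ) * Complex.I) with hγ_def
  have hs2 : s * s = 2 := by
    rw [hs_def]
    rw [← Complex.ofReal_mul, Real.mul_self_sqrt (by norm_num)]
    norm_num
  have hs : s ≠ 0 := by
    intro h
    rw [h] at hs2; norm_num at hs2
  -- smoothness of the slices
  have hf : ContDiff ℝ (⊤ : ℕ∞) (Btilde t) :=
    ((hsmB.of_le le_rfl).comp (contDiff_const.prodMk contDiff_id) : )
  have hg : ContDiff ℝ (⊤ : ℕ∞) (Qtilde t) :=
    ((hsmQ.of_le le_rfl).comp (contDiff_const.prodMk contDiff_id) : )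
  have hBf : B t = deriv (Btilde t) := funext (hB t)
  have hQf : Q t = deriv (Qtilde t) := funext (hQ t)
  have hc' : ∀ y, (deriv (Btilde t) y - deriv (Qtilde t) y) / s =
      γ * Complex.sin ((Btilde t y + Qtilde t y) / s) := by
    intro y
    have := hc t y
    rwa [hB, hQ] at this
  have E2 := third_deriv_identity γ s (Btilde t) (Qtilde t) hf hg hc' x
  have haX := ha t x
  have hbX := hb t x
  rw [hBf] at haX ⊢
  rw [hQf] at hbX ⊢
  have hcx := hc' x
  have hsinv : s⁻¹ = s / 2 := by
    rw [inv_eq_one_div, div_eq_div_iff hs two_ne_zero]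
    linear_combination -hs2
  set Sn : ℂ := Complex.sin ((Btilde t x + Qtilde t x) / s) with hSn
  set Cn : ℂ := Complex.cos ((Btilde t x + Qtilde t x) / s) with hCn
  simp only [div_eq_mul_inv, hsinv] at E2 hcx ⊢
  linear_combination haX - hbX - s * E2 -
      s * ((deriv (Btilde t) x)^2 + deriv (Btilde t) x * deriv (Qtilde t) x +
        (deriv (Qtilde t) x)^2) * hcx +
      ((deriv (deriv (deriv (Btilde t))) x - deriv (deriv (deriv (Qtilde t))) x)/2 +
        γ * Sn *
          (deriv (Btilde t) x + deriv (Qtilde t) x)^2 * s/4 -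
        γ * Cn *
          (deriv (deriv (Btilde t)) x + deriv (deriv (Qtilde t)) x)/2 +
        (deriv (Btilde t) x - deriv (Qtilde t) x) *
          ((deriv (Btilde t) x)^2 + deriv (Btilde t) x * deriv (Qtilde t) x +
            (deriv (Qtilde t) x)^2)/2) * hs2
end
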